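/- arXiv:2602.11654 — 2 statements merged into one kernel-verified Lean document; each statement's English description precedes it below -/
import Mathlib

section
/- Let W be the set of M_p-th roots of unity (M_p ≥ 2), h = a·e^{iα} with a ≥ 0, and φ ∈ ℝ. Then max over w ∈ W of Re(e^{−iφ}·h·w) = a·cos(δ(φ − α)), where δ is the quantization residual to the grid {2πk/M_p}. -/
noncomputable def wrap (φ : ℝ) : ℝ :=
  φ - 2 * Real.pi * ⌊(φ + Real.pi) / (2 * Real.pi)⌋

noncomputable def qres (Mp : ℕ) (φ : ℝ) : ℝ :=
  sInf ((fun k : ℕ => |wrap (φ - 2 * Real.pi * k / Mp)|) '' Set.Iio Mp)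

lemma cos_wrap (x : ℝ) : Real.cos (wrap x) = Real.cos x := by
  unfold wrap
  rw [show (2 * Real.pi * (⌊(x + Real.pi) / (2 * Real.pi)⌋ : ℝ) : ℝ)
      = (⌊(x + Real.pi) / (2 * Real.pi)⌋ : ℤ) * (2 * Real.pi) by ring]
  exact Real.cos_sub_int_mul_two_pi x _

lemma abs_wrap_le_pi (x : ℝ) : |wrap x| ≤ Real.pi := by
  have hpi := Real.pi_pos
  have h2 : (0:ℝ) < 2 * Real.pi := by linarith
  set n : ℤ := ⌊(x + Real.pi) / (2 * Real.pi)⌋ with hn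
  have h1 : (n : ℝ) ≤ (x + Real.pi) / (2 * Real.pi) := Int.floor_le _
  have h2' : (x + Real.pi) / (2 * Real.pi) < n + 1 := Int.lt_floor_add_one _
  have ha1 : (n : ℝ) * (2 * Real.pi) ≤ x + Real.pi := (le_div_iff₀ h2).mp h1
  have ha2 : x + Real.pi < ((n : ℝ) + 1) * (2 * Real.pi) := (div_lt_iff₀ h2).mp h2'
  rw [abs_le]
  unfold wrap
  constructor <;> [nlinarith; nlinarith]

theorem stmt_10 (Mp : ℕ) (hMp : 2 ≤ Mp) (a α φ : ℝ) (ha : 0 ≤ a)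
    (h : ℂ) (hh : h = (a : ℂ) * Complex.exp ((α : ℂ) * Complex.I)) :
    sSup ((fun w : ℂ => (Complex.exp (-(φ : ℂ) * Complex.I) * (h * w)).re) ''
        ((fun k : ℕ => Complex.exp ((2 * Real.pi * k / Mp : ℝ) * Complex.I)) '' Set.Iio Mp)) =
      a * Real.cos (qres Mp (φ - α)) := by
  have hpi := Real.pi_pos
  set ψ : ℝ := φ - α with hψ
  set f : ℕ → ℝ := fun k => |wrap (ψ - 2 * Real.pi * k / Mp)| with hf
  -- rewrite the image set
  have himg : ((fun w : ℂ => (Complex.exp (-(φ : ℂ) * Complex.I) * (h * w)).re) ''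
        ((fun k : ℕ => Complex.exp ((2 * Real.pi * k / Mp : ℝ) * Complex.I)) '' Set.Iio Mp))
      = (fun k : ℕ => a * Real.cos (f k)) '' Set.Iio Mp := by
    rw [Set.image_image]
    apply Set.image_congr
    intro k _
    have : Complex.exp (-(φ : ℂ) * Complex.I) *
        ((a : ℂ) * Complex.exp ((α : ℂ) * Complex.I) *
          Complex.exp (((2 * Real.pi * k / Mp : ℝ) : ℂ) * Complex.I))
        = (a : ℂ) * Complex.exp (((α + 2 * Real.pi * k / Mp - φ : ℝ) : ℂ) * Complex.I) := by
      rw [mul_assoc, ← Complex.exp_add, mul_left_comm, ← Complex.exp_add]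
      congr 1
      push_cast
      ring
    rw [hh, this]
    have : ((a : ℂ) * Complex.exp (((α + 2 * Real.pi * k / Mp - φ : ℝ) : ℂ) * Complex.I)).re
        = a * Real.cos (α + 2 * Real.pi * k / Mp - φ) := by
      rw [Complex.re_ofReal_mul, Complex.exp_ofReal_mul_I_re]
    rw [this, hf]
    simp only
    rw [Real.cos_abs, cos_wrap]
    congr 1
    · rw [show ψ - 2 * Real.pi * k / Mp = -(α + 2 * Real.pi * k / Mp - φ) by rw [hψ]; ring,
        Real.cos_neg]
  rw [himg]
  -- the set of indices is finite and nonempty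
  have hne : (Set.Iio Mp).Nonempty := ⟨0, Set.mem_Iio.mpr (by omega)⟩
  have hfin : (f '' Set.Iio Mp).Finite := (Set.finite_Iio Mp).image f
  have hneT : (f '' Set.Iio Mp).Nonempty := hne.image f
  have hmem : sInf (f '' Set.Iio Mp) ∈ f '' Set.Iio Mp := hneT.csInf_mem hfin
  obtain ⟨k0, hk0, hk0eq⟩ := hmem
  have hq : qres Mp ψ = f k0 := by rw [qres]; exact hk0eq.symm
  have hbdd : BddBelow (f '' Set.Iio Mp) := hfin.bddBelow
  have hub : ∀ k ∈ Set.Iio Mp, a * Real.cos (f k) ≤ a * Real.cos (f k0) := by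
    intro k hk
    have h1 : f k0 ≤ f k := by
      rw [hk0eq]; exact csInf_le hbdd ⟨k, hk, rfl⟩
    have h2 : (0:ℝ) ≤ f k0 := abs_nonneg _
    have h3 : f k ≤ Real.pi := abs_wrap_le_pi _
    have := Real.cos_le_cos_of_nonneg_of_le_pi h2 h3 h1
    exact mul_le_mul_of_nonneg_left this ha
  have : IsGreatest ((fun k : ℕ => a * Real.cos (f k)) '' Set.Iio Mp) (a * Real.cos (f k0)) := by
    constructor
    · exact ⟨k0, hk0, rfl⟩
    · rintro x ⟨k, hk, rfl⟩
      exact hub k hk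
  rw [this.csSup_eq, hq]
end

section
/- Let d, h₁,…,h_M ∈ ℂ, finite nonempty codebooks W₁,…,W_M ⊂ ℂ, and 1 ≤ M₀ ≤ M. For unit-modulus u, define s_m(u) = max_{w∈W_m} Re(conj(u)·h_m·w). Then max over subsets Γ of size M₀ and choices w_m ∈ W_m (m∈Γ) of |d + Σ_{m∈Γ} h_m w_m| equals max over unit-modulus u of [Re(conj(u)·d) + max_{|Γ|=M₀} Σ_{m∈Γ} s_m(u)]. -/
/-!
For a unit-modulus `u`, `Re(conj u * z) ≤ ‖z‖`, with equality when `u` is the phase of `z`. Hence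
the gain `‖d + ∑_{m ∈ Γ} h m * w m‖` is the largest of its projections onto unit directions, and
the order of the two maximizations (over configurations and over directions) may be exchanged.
For a fixed direction the projection is additive over ports, so the best codeword of each port is
chosen independently, which yields the per-port scores `s_m(u)`.
-/

open ComplexConjugate Finset

theorem Set.finite_setOf_exists_card_eq {ι β : Type*} [Finite ι] (f : Finset ι → β) (k : ℕ) :
    {t | ∃ Γ : Finset ι, Γ.card = k ∧ t = f Γ}.Finite :=
  (Set.finite_range f).subset fun _ ⟨Γ, _, hΓ⟩ => ⟨Γ, hΓ.symm⟩

namespace Complex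

theorem re_conj_mul_le_norm {u : ℂ} (hu : ‖u‖ = 1) (z : ℂ) : (conj u * z).re ≤ ‖z‖ :=
  (re_le_norm _).trans (by simp [hu])

theorem exists_norm_eq_one_conj_mul_eq_norm (z : ℂ) :
    ∃ u : ℂ, ‖u‖ = 1 ∧ conj u * z = ‖z‖ := by
  refine ⟨exp (arg z * I), norm_exp_ofReal_mul_I _, ?_⟩
  conv_lhs => rw [← norm_mul_exp_arg_mul_I z]
  rw [← exp_conj, mul_left_comm, ← exp_add]
  simp

section Beamforming

variable {ι : Type*} (d : ℂ) (h : ι → ℂ) (W : ι → Finset ℂ) (hW : ∀ m, (W m).Nonempty)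

theorem re_conj_mul_add_sum (u : ℂ) (Γ : Finset ι) (w : ι → ℂ) :
    (conj u * (d + ∑ m ∈ Γ, h m * w m)).re =
      (conj u * d).re + ∑ m ∈ Γ, (conj u * (h m * w m)).re := by
  simp only [mul_add, mul_sum, add_re, re_sum]

theorem re_conj_mul_add_sum_le (u : ℂ) (Γ : Finset ι) {w : ι → ℂ} (hw : ∀ m ∈ Γ, w m ∈ W m) :
    (conj u * (d + ∑ m ∈ Γ, h m * w m)).re ≤
      (conj u * d).re + ∑ m ∈ Γ, (W m).sup' (hW m) fun w => (conj u * (h m * w)).re := by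
  rw [re_conj_mul_add_sum]
  gcongr with m hm
  exact le_sup' (fun w => (conj u * (h m * w)).re) (hw m hm)

theorem exists_re_conj_mul_add_sum_eq (u : ℂ) (Γ : Finset ι) :
    ∃ w : ι → ℂ, (∀ m, w m ∈ W m) ∧ (conj u * (d + ∑ m ∈ Γ, h m * w m)).re =
      (conj u * d).re + ∑ m ∈ Γ, (W m).sup' (hW m) fun w => (conj u * (h m * w)).re := by
  choose w hw hw_max using fun m => exists_mem_eq_sup' (hW m) fun w => (conj u * (h m * w)).re
  exact ⟨w, hw, by simp only [re_conj_mul_add_sum, hw_max]⟩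

end Beamforming

end Complex

open Complex in
theorem stmt_13_general (M M₀ : ℕ) (hMM : M₀ ≤ M)
    (d : ℂ) (h : Fin M → ℂ) (W : Fin M → Finset ℂ) (hW : ∀ m, (W m).Nonempty) :
    sSup {r : ℝ | ∃ Γ : Finset (Fin M), Γ.card = M₀ ∧
        ∃ w : Fin M → ℂ, (∀ m ∈ Γ, w m ∈ W m) ∧
          r = ‖d + ∑ m ∈ Γ, h m * w m‖} =
      sSup {r : ℝ | ∃ u : ℂ, ‖u‖ = 1 ∧
        r = ((starRingEnd ℂ) u * d).re +
          sSup {t : ℝ | ∃ Γ : Finset (Fin M), Γ.card = M₀ ∧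
            t = ∑ m ∈ Γ,
              (W m).sup' (hW m) (fun w => ((starRingEnd ℂ) u * (h m * w)).re)}} := by
  obtain ⟨Γ₀, -, hΓ₀⟩ := exists_subset_card_eq (s := (univ : Finset (Fin M))) (by simpa using hMM)
  set T := fun u : ℂ => {t : ℝ | ∃ Γ : Finset (Fin M), Γ.card = M₀ ∧
    t = ∑ m ∈ Γ, (W m).sup' (hW m) fun w => (conj u * (h m * w)).re}
  have hT_fin (u : ℂ) : (T u).Finite := Set.finite_setOf_exists_card_eq _ M₀
  have hT_ne (u : ℂ) : (T u).Nonempty := ⟨_, Γ₀, hΓ₀, rfl⟩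
  refine csSup_eq_csSup_of_forall_exists_le ?_ ?_
  · rintro _ ⟨Γ, hΓ, w, hw, rfl⟩
    obtain ⟨u, hu, hphase⟩ := exists_norm_eq_one_conj_mul_eq_norm (d + ∑ m ∈ Γ, h m * w m)
    refine ⟨_, ⟨u, hu, rfl⟩, ?_⟩
    calc ‖d + ∑ m ∈ Γ, h m * w m‖ = (conj u * (d + ∑ m ∈ Γ, h m * w m)).re := by simp [hphase]
      _ ≤ _ := re_conj_mul_add_sum_le d h W hW u Γ hw
      _ ≤ _ := add_le_add_right (le_csSup (hT_fin u).bddAbove ⟨Γ, hΓ, rfl⟩) _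
  · rintro _ ⟨u, hu, rfl⟩
    obtain ⟨Γ, hΓ, hΓ_max⟩ := (hT_ne u).csSup_mem (hT_fin u)
    obtain ⟨w, hw, hw_max⟩ := exists_re_conj_mul_add_sum_eq d h W hW u Γ
    refine ⟨_, ⟨Γ, hΓ, w, fun m _ => hw m, rfl⟩, ?_⟩
    rw [hΓ_max, ← hw_max]
    exact re_conj_mul_le_norm hu _

theorem stmt_13 (M M₀ : ℕ) (hM₀ : 1 ≤ M₀) (hMM : M₀ ≤ M)
    (d : ℂ) (h : Fin M → ℂ) (W : Fin M → Finset ℂ) (hW : ∀ m, (W m).Nonempty) :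
    sSup {r : ℝ | ∃ Γ : Finset (Fin M), Γ.card = M₀ ∧
        ∃ w : Fin M → ℂ, (∀ m ∈ Γ, w m ∈ W m) ∧
          r = ‖d + ∑ m ∈ Γ, h m * w m‖} =
      sSup {r : ℝ | ∃ u : ℂ, ‖u‖ = 1 ∧
        r = ((starRingEnd ℂ) u * d).re +
          sSup {t : ℝ | ∃ Γ : Finset (Fin M), Γ.card = M₀ ∧
            t = ∑ m ∈ Γ,
              (W m).sup' (hW m) (fun w => ((starRingEnd ℂ) u * (h m * w)).re)}} :=
  stmt_13_general M M₀ hMM d h W hW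
end
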